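/- Let f, g be representable positive functionals on a *-algebra A, with the decomposition g = g_a + g_s as in the Lebesgue decomposition (g_a(a) = ⟨π_B(a)(I−P)ζ_B,(I−P)ζ_B⟩ where P projects onto M). Then g_a is absolutely continuous with respect to f: for any sequence (a_n) in A, if f(a_n*a_n) → 0 and g_a((a_n−a_m)*(a_n−a_m)) → 0 (as n,m → ∞), then g_a(a_n*a_n) → 0. -/

import Mathlib

open scoped ComplexOrder InnerProductSpace
open Filter Topology

set_option linter.unusedSectionVars false

/-- A linear functional on a `*`-algebra is *representable* if it is positive,
satisfies `|f a|² ≤ C · f (a⋆ a)` for some `C ≥ 0`, and satisfies the boundedness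
condition `f (b⋆ x⋆ x b) ≤ λ_x · f (b⋆ b)` for every `x`. -/
def IsRepresentable {A : Type*} [Ring A] [StarRing A] [Algebra ℂ A] [StarModule ℂ A]
    (f : A →ₗ[ℂ] ℂ) : Prop :=
  (∀ a : A, 0 ≤ f (star a * a)) ∧
  (∃ C : ℝ, 0 ≤ C ∧ ∀ a : A, ‖f a‖ ^ 2 ≤ C * (f (star a * a)).re) ∧
  (∀ x : A, ∃ lam : ℝ, 0 ≤ lam ∧
    ∀ b : A, (f (star (x * b) * (x * b))).re ≤ lam * (f (star b * b)).re)

/-- The subspace `M = {ζ ∈ H_B | ∃ (aₙ), f (aₙ⋆ aₙ) → 0 and B aₙ = π_B aₙ ζ_B → ζ}`. -/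
def lebSet {A : Type*} [Ring A] [StarRing A] [Algebra ℂ A] [StarModule ℂ A]
    {HB : Type*} [NormedAddCommGroup HB] [InnerProductSpace ℂ HB] [CompleteSpace HB]
    (f : A →ₗ[ℂ] ℂ) (πB : A →ₗ[ℂ] (HB →L[ℂ] HB)) (ζB : HB) : Set HB :=
  {ζ : HB | ∃ a : ℕ → A,
    Tendsto (fun n => f (star (a n) * a n)) atTop (nhds 0) ∧
    Tendsto (fun n => πB (a n) ζB) atTop (nhds ζ)}

variable {A : Type*} [Ring A] [StarRing A] [Algebra ℂ A] [StarModule ℂ A]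
variable {HB : Type*} [NormedAddCommGroup HB] [InnerProductSpace ℂ HB] [CompleteSpace HB]

/-!
Put `ξ = (I − P) ζ_B`, so that `g_a (b⋆ b) = ‖π_B b ξ‖²`. The hypothesis says that `π_B aₙ ξ` is
Cauchy; let `η` be its limit. Since `f` is representable, `M` is `π_B`-invariant, hence so is `Mᗮ`
(`π_B` is a `*`-representation), and `η ∈ Mᗮ` as a limit of vectors of `Mᗮ`. On the other hand
`π_B aₙ ξ = π_B aₙ ζ_B − π_B aₙ P ζ_B` with `f (aₙ⋆ aₙ) → 0` and `π_B aₙ P ζ_B ∈ M`, and a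
diagonal argument shows that such limits lie in `M`. So `η = 0`, i.e. `g_a (aₙ⋆ aₙ) → 0`.
-/

lemma tendsto_re_nhds_zero_iff_of_nonneg {ι : Type*} {l : Filter ι} {z : ι → ℂ}
    (hz : ∀ i, 0 ≤ z i) : Tendsto (fun i => (z i).re) l (𝓝 0) ↔ Tendsto z l (𝓝 0) := by
  have hnorm : ∀ i, ‖z i‖ = (z i).re := fun i => by
    simpa using congrArg Complex.re (Complex.norm_of_nonneg' (hz i))
  simp only [tendsto_zero_iff_norm_tendsto_zero (f := z), hnorm]

lemma tendsto_ofReal_norm_sq_nhds_zero_iff {ι E : Type*} [SeminormedAddCommGroup E]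
    {l : Filter ι} {v : ι → E} :
    Tendsto (fun i => ((‖v i‖ : ℂ)) ^ 2) l (𝓝 0) ↔ Tendsto v l (𝓝 0) := by
  simp only [tendsto_zero_iff_norm_tendsto_zero (f := v), tendsto_zero_iff_norm_tendsto_zero,
    norm_pow, Complex.norm_real, norm_norm]
  refine ⟨fun h => ?_, fun h => by simpa using h.pow 2⟩
  simpa [Real.sqrt_sq (norm_nonneg _)] using h.sqrt

section PositiveFunctional

variable {f : A →ₗ[ℂ] ℂ} {πB : A →ₗ[ℂ] (HB →L[ℂ] HB)} {ζB : HB}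

lemma re_apply_star_sub_mul_sub_le (hfpos : ∀ a : A, 0 ≤ f (star a * a)) (x y : A) :
    (f (star (x - y) * (x - y))).re ≤ 2 * (f (star x * x)).re + 2 * (f (star y * y)).re := by
  have parallelogram : f (star (x - y) * (x - y)) + f (star (x + y) * (x + y))
      = 2 * f (star x * x) + 2 * f (star y * y) := by
    rw [← map_add, two_mul, two_mul, ← map_add, ← map_add, ← map_add]
    congr 1
    simp only [star_sub, star_add]
    noncomm_ring
  have hsum := congrArg Complex.re parallelogram
  simp only [Complex.add_re, Complex.mul_re, Complex.re_ofNat, Complex.im_ofNat, zero_mul,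
    sub_zero] at hsum
  linarith [(Complex.nonneg_iff.mp (hfpos (x + y))).1]

lemma mem_lebSet_iff (hfpos : ∀ a : A, 0 ≤ f (star a * a)) {ζ : HB} :
    ζ ∈ lebSet f πB ζB ↔
      ∀ ε > 0, ∃ b : A, (f (star b * b)).re < ε ∧ dist (πB b ζB) ζ < ε := by
  constructor
  · rintro ⟨b, hbf, hbζ⟩ ε hε
    have hbf' := (tendsto_re_nhds_zero_iff_of_nonneg fun n => hfpos (b n)).2 hbf
    obtain ⟨n, hn⟩ := ((hbf'.eventually (gt_mem_nhds hε)).and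
      (Metric.tendsto_nhds.mp hbζ ε hε)).exists
    exact ⟨b n, hn⟩
  · intro h
    choose b hbf hbζ using fun n : ℕ => h (1 / ((n : ℝ) + 1)) Nat.one_div_pos_of_nat
    refine ⟨b, (tendsto_re_nhds_zero_iff_of_nonneg fun n => hfpos (b n)).1 ?_, ?_⟩
    · exact squeeze_zero (fun n => (Complex.nonneg_iff.mp (hfpos (b n))).1)
        (fun n => (hbf n).le) tendsto_one_div_add_atTop_nhds_zero_nat
    · exact tendsto_iff_dist_tendsto_zero.mpr (squeeze_zero (fun n => dist_nonneg)
        (fun n => (hbζ n).le) tendsto_one_div_add_atTop_nhds_zero_nat)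

lemma mem_lebSet_of_tendsto_sub (hfpos : ∀ a : A, 0 ≤ f (star a * a))
    {a : ℕ → A} {v : ℕ → HB} {η : HB}
    (ha : Tendsto (fun n => f (star (a n) * a n)) atTop (𝓝 0))
    (hv : ∀ n, v n ∈ lebSet f πB ζB)
    (hη : Tendsto (fun n => πB (a n) ζB - v n) atTop (𝓝 η)) :
    η ∈ lebSet f πB ζB := by
  rw [mem_lebSet_iff hfpos]
  intro ε hε
  have ha' := (tendsto_re_nhds_zero_iff_of_nonneg fun n => hfpos (a n)).2 ha
  obtain ⟨n, hnf, hnη⟩ := ((ha'.eventually (gt_mem_nhds (by positivity : 0 < ε / 4))).and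
    (Metric.tendsto_nhds.mp hη (ε / 2) (by positivity))).exists
  obtain ⟨b, hbf, hbv⟩ := (mem_lebSet_iff hfpos).1 (hv n) (ε / 4) (by positivity)
  refine ⟨a n - b, ?_, ?_⟩
  · linarith [re_apply_star_sub_mul_sub_le hfpos (a n) b]
  · calc dist (πB (a n - b) ζB) η
        = dist ((πB (a n) ζB - v n) + (v n - πB b ζB)) η := by
          rw [map_sub, sub_apply, sub_add_sub_cancel]
      _ ≤ ‖v n - πB b ζB‖ + dist (πB (a n) ζB - v n) η :=
          (dist_triangle _ _ _).trans_eq (by rw [dist_self_add_left])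
      _ < ε := by rw [← dist_eq_norm, dist_comm]; linarith

lemma apply_mem_lebSet (hf : IsRepresentable f)
    (hmul : ∀ x y : A, πB (x * y) = (πB x).comp (πB y)) (x : A) {ζ : HB}
    (hζ : ζ ∈ lebSet f πB ζB) : πB x ζ ∈ lebSet f πB ζB := by
  obtain ⟨hfpos, -, hfbound⟩ := hf
  obtain ⟨b, hbf, hbζ⟩ := hζ
  obtain ⟨lam, -, hlam⟩ := hfbound x
  refine ⟨fun n => x * b n, ?_, ?_⟩
  · rw [← tendsto_re_nhds_zero_iff_of_nonneg fun n => hfpos _]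
    rw [← tendsto_re_nhds_zero_iff_of_nonneg fun n => hfpos _] at hbf
    exact squeeze_zero (fun n => (Complex.nonneg_iff.mp (hfpos _)).1)
      (fun n => hlam (b n)) (by simpa using hbf.const_mul lam)
  · simp only [hmul, ContinuousLinearMap.comp_apply]
    exact ((πB x).continuous.tendsto ζ).comp hbζ

end PositiveFunctional

section Representation

variable {πB : A →ₗ[ℂ] (HB →L[ℂ] HB)}

lemma apply_mem_orthogonal_of_forall_apply_mem
    (hstar : ∀ (x : A) (u v : HB), ⟪u, πB x v⟫_ℂ = ⟪πB (star x) u, v⟫_ℂ)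
    {M : Submodule ℂ HB} (hM : ∀ (x : A), ∀ ζ ∈ M, πB x ζ ∈ M) (x : A) {ζ : HB}
    (hζ : ζ ∈ Mᗮ) : πB x ζ ∈ Mᗮ := by
  rw [Submodule.mem_orthogonal]
  intro u hu
  rw [hstar]
  exact Submodule.inner_right_of_mem_orthogonal (hM (star x) u hu) hζ

lemma inner_apply_star_mul_self (hmul : ∀ x y : A, πB (x * y) = (πB x).comp (πB y))
    (hstar : ∀ (x : A) (u v : HB), ⟪u, πB x v⟫_ℂ = ⟪πB (star x) u, v⟫_ℂ) (b : A) (v : HB) :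
    ⟪v, πB (star b * b) v⟫_ℂ = (‖πB b v‖ : ℂ) ^ 2 := by
  rw [hmul, ContinuousLinearMap.comp_apply, hstar, star_star, inner_self_eq_norm_sq_to_K]
  rfl

end Representation

theorem absolutely_continuous_part_is_absolutely_continuous_general
    (f : A →ₗ[ℂ] ℂ) (hf : IsRepresentable f)
    (πB : A →ₗ[ℂ] (HB →L[ℂ] HB)) (ζB : HB)
    (hmul : ∀ x y : A, πB (x * y) = (πB x).comp (πB y))
    (hstar : ∀ (x : A) (u v : HB), ⟪u, πB x v⟫_ℂ = ⟪πB (star x) u, v⟫_ℂ)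
    (M : Submodule ℂ HB) (hM : (M : Set HB) = lebSet f πB ζB)
    (P : HB →L[ℂ] HB) (hP : ∀ ζ : HB, P ζ ∈ M ∧ ζ - P ζ ∈ Mᗮ) :
    ∀ a : ℕ → A,
      Tendsto (fun n => f (star (a n) * a n)) atTop (nhds 0) →
      Tendsto (fun p : ℕ × ℕ =>
          ⟪ζB - P ζB, πB (star (a p.1 - a p.2) * (a p.1 - a p.2)) (ζB - P ζB)⟫_ℂ)
        (atTop ×ˢ atTop) (nhds 0) →
      Tendsto (fun n => ⟪ζB - P ζB, πB (star (a n) * a n) (ζB - P ζB)⟫_ℂ)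
        atTop (nhds 0) := by
  intro a hfa hcauchy
  have hmem : ∀ {ζ : HB}, ζ ∈ M ↔ ζ ∈ lebSet f πB ζB := by
    intro ζ
    rw [← hM, SetLike.mem_coe]
  have hMinv : ∀ x : A, ∀ ζ ∈ M, πB x ζ ∈ M := fun x ζ hζ =>
    hmem.2 (apply_mem_lebSet hf hmul x (hmem.1 hζ))
  set ξ := ζB - P ζB
  simp only [inner_apply_star_mul_self hmul hstar, tendsto_ofReal_norm_sq_nhds_zero_iff,
    map_sub, sub_apply] at hcauchy ⊢
  have hu : CauchySeq fun n => πB (a n) ξ := by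
    rw [cauchySeq_iff_tendsto_dist_atTop_0, ← prod_atTop_atTop_eq]
    simpa only [dist_eq_norm, norm_zero] using hcauchy.norm
  obtain ⟨η, hη⟩ := cauchySeq_tendsto_of_complete hu
  have hη_perp : η ∈ Mᗮ := (Submodule.isClosed_orthogonal M).mem_of_tendsto hη
    (Eventually.of_forall fun n =>
      apply_mem_orthogonal_of_forall_apply_mem hstar hMinv (a n) (hP ζB).2)
  have hη_mem : η ∈ M := hmem.2 <| mem_lebSet_of_tendsto_sub hf.1 hfa
    (fun n => hmem.1 (hMinv (a n) _ (hP ζB).1)) (by simpa only [ξ, map_sub] using hη)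
  have hη_zero : η = 0 := (Submodule.orthogonal_disjoint M).le_bot ⟨hη_mem, hη_perp⟩
  rwa [hη_zero] at hη

/-- The absolutely continuous part `g_a a = ⟨π_B a (I − P) ζ_B, (I − P) ζ_B⟩` of the Lebesgue
decomposition of `g` with respect to `f` is `f`-absolutely continuous: if `f (aₙ⋆ aₙ) → 0` and
`g_a ((aₙ − a_m)⋆ (aₙ − a_m)) → 0` (as `n, m → ∞`), then `g_a (aₙ⋆ aₙ) → 0`. -/
theorem absolutely_continuous_part_is_absolutely_continuous
    (f g : A →ₗ[ℂ] ℂ) (hf : IsRepresentable f) (hg : IsRepresentable g)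
    (πB : A →ₗ[ℂ] (HB →L[ℂ] HB)) (ζB : HB)
    (hmul : ∀ x y : A, πB (x * y) = (πB x).comp (πB y))
    (hstar : ∀ (x : A) (u v : HB), ⟪u, πB x v⟫_ℂ = ⟪πB (star x) u, v⟫_ℂ)
    (hgns : ∀ a : A, g a = ⟪ζB, πB a ζB⟫_ℂ)
    (hcyc : Dense (Set.range fun a : A => πB a ζB))
    (M : Submodule ℂ HB) (hM : (M : Set HB) = lebSet f πB ζB)
    (P : HB →L[ℂ] HB) (hP : ∀ ζ : HB, P ζ ∈ M ∧ ζ - P ζ ∈ Mᗮ) :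
    ∀ a : ℕ → A,
      Tendsto (fun n => f (star (a n) * a n)) atTop (nhds 0) →
      Tendsto (fun p : ℕ × ℕ =>
          ⟪ζB - P ζB, πB (star (a p.1 - a p.2) * (a p.1 - a p.2)) (ζB - P ζB)⟫_ℂ)
        (atTop ×ˢ atTop) (nhds 0) →
      Tendsto (fun n => ⟪ζB - P ζB, πB (star (a n) * a n) (ζB - P ζB)⟫_ℂ)
        atTop (nhds 0) :=
  absolutely_continuous_part_is_absolutely_continuous_general f hf πB ζB hmul hstar M hM P hP
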